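/- For every rooted binary tree T with n ≥ 1 leaves, C(T) - S(T) ≤ -2n + 2, with equality if and only if T is the caterpillar tree on n leaves. -/

import Mathlib

/-- Rooted binary trees: a leaf, or an internal vertex with two child subtrees. -/
inductive BTree where
  | leaf : BTree
  | node : BTree → BTree → BTree
deriving DecidableEq

namespace BTree

/-- Number of leaves of a rooted binary tree. -/
def numLeaves : BTree → ℕ
  | leaf => 1
  | node l r => numLeaves l + numLeaves r

/-- Sackin index: sum over internal vertices `v` of `n_{v_a} + n_{v_b}`. -/
def sackin : BTree → ℕ
  | leaf => 0
  | node l r => sackin l + sackin r + (numLeaves l + numLeaves r)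

/-- Colless index: sum over internal vertices `v` of `|n_{v_a} - n_{v_b}|`. -/
def colless : BTree → ℕ
  | leaf => 0
  | node l r =>
      colless l + colless r +
        (max (numLeaves l) (numLeaves r) - min (numLeaves l) (numLeaves r))

/-- `N_a`: sum over internal vertices of the larger child-subtree leaf count. -/
def Na : BTree → ℕ
  | leaf => 0
  | node l r => Na l + Na r + max (numLeaves l) (numLeaves r)

/-- `N_b`: sum over internal vertices of the smaller child-subtree leaf count. -/
def Nb : BTree → ℕ
  | leaf => 0
  | node l r => Nb l + Nb r + min (numLeaves l) (numLeaves r)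

/-- `Δ_CS = C - S`, as an integer. -/
def deltaCS (T : BTree) : ℤ := (colless T : ℤ) - (sackin T : ℤ)

/-- Caterpillar trees: every internal vertex has at least one leaf child. -/
def isCaterpillar : BTree → Prop
  | leaf => True
  | node l r => (l = leaf ∧ isCaterpillar r) ∨ (r = leaf ∧ isCaterpillar l)

/-- The fully balanced tree of height `h`. -/
def fbTree : ℕ → BTree
  | 0 => leaf
  | h + 1 => node (fbTree h) (fbTree h)

end BTree

/-
Locally `C = N_a - N_b` and `S = N_a + N_b`, so `C - S = -2 N_b`. Every internal vertex
contributes at least `1` to `N_b`, and there are `n - 1` of them, so `N_b ≥ n - 1`, with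
equality exactly when the smaller pending subtree at every internal vertex is a single leaf.
-/

namespace BTree

lemma one_le_numLeaves (T : BTree) : 1 ≤ numLeaves T := by
  induction T with
  | leaf => rfl
  | node l r ihl ihr => simp only [numLeaves]; omega

lemma numLeaves_eq_one_iff {T : BTree} : numLeaves T = 1 ↔ T = leaf := by
  cases T with
  | leaf => simp [numLeaves]
  | node l r =>
    simp only [numLeaves, reduceCtorEq, iff_false]
    have := one_le_numLeaves l
    have := one_le_numLeaves r
    omega

lemma isCaterpillar_node_iff {l r : BTree} :
    isCaterpillar (node l r) ↔ isCaterpillar l ∧ isCaterpillar r ∧ (l = leaf ∨ r = leaf) := by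
  rw [isCaterpillar]
  constructor
  · rintro (⟨rfl, hr⟩ | ⟨rfl, hl⟩)
    · exact ⟨trivial, hr, .inl rfl⟩
    · exact ⟨hl, trivial, .inr rfl⟩
  · rintro ⟨hl, hr, rfl | rfl⟩
    · exact .inl ⟨rfl, hr⟩
    · exact .inr ⟨rfl, hl⟩

lemma sackin_eq_colless_add_two_mul_Nb (T : BTree) : sackin T = colless T + 2 * Nb T := by
  induction T with
  | leaf => rfl
  | node l r ihl ihr =>
    simp only [sackin, colless, Nb, ihl, ihr]
    omega

lemma numLeaves_le_Nb_add_one (T : BTree) : numLeaves T ≤ Nb T + 1 := by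
  induction T with
  | leaf => rfl
  | node l r ihl ihr =>
    have := one_le_numLeaves l
    have := one_le_numLeaves r
    simp only [numLeaves, Nb]
    omega

lemma numLeaves_eq_Nb_add_one_iff (T : BTree) : numLeaves T = Nb T + 1 ↔ isCaterpillar T := by
  induction T with
  | leaf => simp [numLeaves, Nb, isCaterpillar]
  | node l r ihl ihr =>
    rw [isCaterpillar_node_iff, ← ihl, ← ihr, ← numLeaves_eq_one_iff, ← numLeaves_eq_one_iff]
    have := one_le_numLeaves l
    have := one_le_numLeaves r
    have := numLeaves_le_Nb_add_one l
    have := numLeaves_le_Nb_add_one r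
    simp only [numLeaves, Nb]
    omega

end BTree

open BTree in
/-- `C(T) - S(T) ≤ -2n + 2`, with equality iff `T` is the caterpillar tree. -/
theorem colless_sub_sackin_le (T : BTree) :
    (colless T : ℤ) - (sackin T : ℤ) ≤ -2 * (numLeaves T : ℤ) + 2 ∧
      ((colless T : ℤ) - (sackin T : ℤ) = -2 * (numLeaves T : ℤ) + 2 ↔
        isCaterpillar T) := by
  have hS := sackin_eq_colless_add_two_mul_Nb T
  have hn := numLeaves_le_Nb_add_one T
  rw [← numLeaves_eq_Nb_add_one_iff]
  omega
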